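/- Let λ > 0 and T > 0 and let q : [0,∞) → [0,∞) be measurable and locally integrable. For each n ≥ 1 define by induction f_0(T, y) := ∫_0^T w(y, t) e^{-∫_0^t (q(s)+λ) ds} dt (where w is nonnegative measurable and the shifted versions w(r+·), q(r+·) are used after time shifts) and f_n(T) := ∫_0^T λ e^{-∫_0^{r}(q(s)+λ)ds} f_{n-1}(T - r; shifted by r) dr. If f_{n-1}(T) = ∫_0^T (λ^{n-1} t^{n-1}/(n-1)!) w(t) e^{-∫_0^t (q(s)+λ) ds} dt for all T and all time shifts, then f_n(T) = ∫_0^T (λ^n t^n/n!) w(t) e^{-∫_0^t (q(s)+λ) ds} dt. -/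

import Mathlib

open MeasureTheory intervalIntegral Set Function
open scoped Nat

/-!
Write `E u = exp (-∫₀ᵘ (q + λ))`. Additivity of the integral gives the cocycle identity
`E r · exp (-∫₀ᵗ (q (r + ·) + λ)) = E (r + t)`, so after the substitution `u = r + t` the integrand
of the left-hand side becomes `∫ᵣᵀ λⁿ (u - r)ⁿ⁻¹ / (n-1)! · w u · E u du`. Exchanging the order of
integration over the triangle `0 < r < u ≤ T` leaves the inner integral
`∫₀ᵘ (u - r)ⁿ⁻¹ / (n-1)! dr = uⁿ / n!`.
-/

theorem MeasureTheory.LocallyIntegrable.intervalIntegrable {E : Type*} [NormedAddCommGroup E]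
    {f : ℝ → E} (hf : LocallyIntegrable f) (a b : ℝ) :
    IntervalIntegrable f volume a b :=
  (hf.integrableOn_isCompact isCompact_uIcc).intervalIntegrable

theorem exp_neg_integral_mul_exp_neg_integral_comp_add {f : ℝ → ℝ} (hf : LocallyIntegrable f)
    (r t : ℝ) :
    Real.exp (-∫ s in (0:ℝ)..r, f s) * Real.exp (-∫ s in (0:ℝ)..t, f (r + s)) =
      Real.exp (-∫ s in (0:ℝ)..(r + t), f s) := by
  rw [integral_comp_add_left f r, add_zero, ← Real.exp_add, ← neg_add,
    integral_add_adjacent_intervals (hf.intervalIntegrable 0 r) (hf.intervalIntegrable r _)]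

theorem integral_sub_pow_div_factorial (u : ℝ) (m : ℕ) :
    ∫ r in (0:ℝ)..u, (u - r) ^ m / m ! = u ^ (m + 1) / (m + 1)! := by
  rw [intervalIntegral.integral_div, integral_comp_sub_left (fun x => x ^ m), sub_self, sub_zero,
    integral_pow, Nat.factorial_succ, Nat.cast_mul, zero_pow m.succ_ne_zero, sub_zero, div_div]
  push_cast
  ring

theorem integrable_prod_restrict_Ioc_of_continuous_mul {k : ℝ → ℝ → ℝ} {h : ℝ → ℝ} {a b : ℝ}
    (hk : Continuous (uncurry k)) (hh : IntegrableOn h (Ioc a b)) :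
    Integrable (fun p : ℝ × ℝ => k p.1 p.2 * h p.2)
      ((volume.restrict (Ioc a b)).prod (volume.restrict (Ioc a b))) := by
  obtain ⟨C, hC⟩ :=
    (isCompact_Icc.prod (isCompact_Icc (a := a) (b := b))).exists_bound_of_continuousOn
      hk.continuousOn
  have hbound : Integrable (fun p : ℝ × ℝ => C * ‖h p.2‖)
      ((volume.restrict (Ioc a b)).prod (volume.restrict (Ioc a b))) :=
    (hh.norm.comp_snd _).const_mul C
  refine hbound.mono' (hk.aestronglyMeasurable.mul
    (hh.aestronglyMeasurable.comp_quasiMeasurePreserving Measure.quasiMeasurePreserving_snd)) ?_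
  rw [Measure.prod_restrict]
  filter_upwards [ae_restrict_mem (measurableSet_Ioc.prod measurableSet_Ioc)] with p hp
  rw [norm_mul]
  exact mul_le_mul_of_nonneg_right
    (hC p ⟨Ioc_subset_Icc_self hp.1, Ioc_subset_Icc_self hp.2⟩) (norm_nonneg _)

theorem integral_integral_swap_triangle {E : Type*} [NormedAddCommGroup E] [NormedSpace ℝ E]
    {F : ℝ → ℝ → E} {a b : ℝ} (hab : a ≤ b)
    (hF : Integrable (uncurry F) ((volume.restrict (Ioc a b)).prod (volume.restrict (Ioc a b)))) :
    ∫ r in a..b, ∫ u in r..b, F r u = ∫ u in a..b, ∫ r in a..u, F r u := by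
  set G : ℝ → ℝ → E := fun r u => {p : ℝ × ℝ | p.1 < p.2}.indicator (uncurry F) (r, u)
  have hG : Integrable (uncurry G)
      ((volume.restrict (Ioc a b)).prod (volume.restrict (Ioc a b))) :=
    hF.indicator (measurableSet_lt measurable_fst measurable_snd)
  have outer : ∀ r ∈ Ioc a b, ∫ u in r..b, F r u = ∫ u in Ioc a b, G r u := by
    intro r hr
    have hGr : G r = (Ioi r).indicator (F r) := by
      ext u; simp [G, indicator_apply]
    rw [integral_of_le hr.2, hGr, setIntegral_indicator measurableSet_Ioi, Ioc_inter_Ioi,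
      max_eq_right hr.1.le]
  have inner : ∀ u ∈ Ioc a b, ∫ r in a..u, F r u = ∫ r in Ioc a b, G r u := by
    intro u hu
    have hGu : (G · u) = (Iio u).indicator (F · u) := by
      ext r; simp [G, indicator_apply]
    have hset : Ioc a b ∩ Iio u = Ioo a u := by
      ext r; simp only [mem_inter_iff, mem_Ioc, mem_Iio, mem_Ioo]; constructor
      · rintro ⟨⟨har, -⟩, hru⟩; exact ⟨har, hru⟩
      · rintro ⟨har, hru⟩; exact ⟨⟨har, hru.le.trans hu.2⟩, hru⟩
    rw [integral_of_le hu.1.le, hGu, setIntegral_indicator measurableSet_Iio, hset,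
      integral_Ioc_eq_integral_Ioo]
  rw [integral_of_le hab, integral_of_le hab, setIntegral_congr_fun measurableSet_Ioc outer,
    setIntegral_congr_fun measurableSet_Ioc inner]
  exact integral_integral_swap hG

theorem stmt_15_general (lam : ℝ) (n : ℕ) (hn : 1 ≤ n)
    (q w : ℝ → ℝ)
    (hqi : MeasureTheory.LocallyIntegrable q) (hwi : MeasureTheory.LocallyIntegrable w)
    (fprev : ℝ → ℝ → ℝ)
    (hprev : ∀ T r : ℝ, 0 ≤ T → 0 ≤ r →
      fprev T r = ∫ t in (0:ℝ)..T,
        lam ^ (n - 1) * t ^ (n - 1) / (Nat.factorial (n - 1)) * w (r + t) *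
          Real.exp (-∫ s in (0:ℝ)..t, (q (r + s) + lam)))
    (T : ℝ) (hT : 0 ≤ T) :
    ∫ r in (0:ℝ)..T, lam * Real.exp (-∫ s in (0:ℝ)..r, (q s + lam)) * fprev (T - r) r =
      ∫ t in (0:ℝ)..T, lam ^ n * t ^ n / (Nat.factorial n) * w t *
        Real.exp (-∫ s in (0:ℝ)..t, (q s + lam)) := by
  obtain ⟨m, rfl⟩ := Nat.exists_eq_add_of_le' hn
  simp only [Nat.add_sub_cancel] at hprev
  have hqlam : LocallyIntegrable (fun s => q s + lam) := hqi.add (locallyIntegrable_const lam)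
  set E : ℝ → ℝ := fun u => Real.exp (-∫ s in (0:ℝ)..u, (q s + lam))
  have hEcont : Continuous E :=
    Real.continuous_exp.comp (continuous_primitive hqlam.intervalIntegrable 0).neg
  set k : ℝ → ℝ → ℝ := fun r u => lam ^ (m + 1) * ((u - r) ^ m / m !) * E u
  have hk : Continuous (uncurry k) := by fun_prop
  have shift : ∀ r ∈ uIcc 0 T,
      lam * E r * fprev (T - r) r = ∫ u in r..T, k r u * w u := by
    intro r hr
    rw [uIcc_of_le hT] at hr
    have hsplit : ∀ t, E r * Real.exp (-∫ s in (0:ℝ)..t, (q (r + s) + lam)) = E (r + t) :=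
      exp_neg_integral_mul_exp_neg_integral_comp_add hqlam r
    have hsub : ∫ u in r..T, k r u * w u = ∫ t in (0:ℝ)..T - r, k r (r + t) * w (r + t) := by
      rw [integral_comp_add_left (fun u => k r u * w u), add_zero, add_sub_cancel]
    rw [hprev (T - r) r (by linarith [hr.2]) hr.1, ← intervalIntegral.integral_const_mul, hsub]
    refine integral_congr fun t _ => ?_
    simp only [k, ← hsplit, add_sub_cancel_left]
    ring
  calc ∫ r in (0:ℝ)..T, lam * E r * fprev (T - r) r
      = ∫ r in (0:ℝ)..T, ∫ u in r..T, k r u * w u := integral_congr shift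
    _ = ∫ u in (0:ℝ)..T, ∫ r in (0:ℝ)..u, k r u * w u :=
        integral_integral_swap_triangle hT
          (integrable_prod_restrict_Ioc_of_continuous_mul hk
            ((hwi.integrableOn_isCompact isCompact_Icc).mono_set Ioc_subset_Icc_self))
    _ = _ := integral_congr fun u _ => by
        simp only [k, intervalIntegral.integral_mul_const, intervalIntegral.integral_const_mul,
          integral_sub_pow_div_factorial]
        ring

theorem stmt_15 (lam : ℝ) (hlam : 0 < lam) (n : ℕ) (hn : 1 ≤ n)
    (q w : ℝ → ℝ) (hq : Measurable q) (hw : Measurable w)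
    (hq0 : ∀ s, 0 ≤ q s) (hw0 : ∀ s, 0 ≤ w s)
    (hqi : MeasureTheory.LocallyIntegrable q) (hwi : MeasureTheory.LocallyIntegrable w)
    (fprev : ℝ → ℝ → ℝ)
    (hprev : ∀ T r : ℝ, 0 ≤ T → 0 ≤ r →
      fprev T r = ∫ t in (0:ℝ)..T,
        lam ^ (n - 1) * t ^ (n - 1) / (Nat.factorial (n - 1)) * w (r + t) *
          Real.exp (-∫ s in (0:ℝ)..t, (q (r + s) + lam)))
    (T : ℝ) (hT : 0 ≤ T) :
    ∫ r in (0:ℝ)..T, lam * Real.exp (-∫ s in (0:ℝ)..r, (q s + lam)) * fprev (T - r) r =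
      ∫ t in (0:ℝ)..T, lam ^ n * t ^ n / (Nat.factorial n) * w t *
        Real.exp (-∫ s in (0:ℝ)..t, (q s + lam)) :=
  stmt_15_general lam n hn q w hqi hwi fprev hprev T hT
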